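/- arXiv:1902.07859 — 6 statements merged into one kernel-verified Lean document; each statement's English description precedes it below -/
import Mathlib

section
/- (Proposition 1, V2I transmission only, unclamped form.) Let B > 0, c > 0, v > 0, a ∈ ℝ, μ ∈ ℝ, σ > 0, δ ∈ (0,1), and let Φ denote the cumulative distribution function of the standard normal distribution. Let x ∈ ℝ satisfy Φ(x) = 1 - δ·(1 - Φ(-μ/σ)), and assume μ + σ·x ≥ 0. Define the transmission rate r(p) = (B/ln 2)·(ln(1 + c·p) − a) for p ≥ 0, and let q be a random variable distributed with the truncated Gaussian density f(q) = exp(-(q-μ)²/(2σ²)) / (√(2π)·σ·(1-Φ(-μ/σ))) on [0,∞). Then for every p ≥ 0, the outage constraint P{ r(p) < q·v } ≤ δ holds if and only if p ≥ (1/c)·( exp( v·(σ·x + μ)·(ln 2)/B + a ) − 1 ). -/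
open MeasureTheory Real Set

noncomputable def stdNormalCDF (x : ℝ) : ℝ :=
  ∫ t in Set.Iic x, Real.exp (-(t ^ 2) / 2) / Real.sqrt (2 * Real.pi)

namespace V2IAux

lemma gauss_integrable : Integrable (fun t : ℝ => Real.exp (-(t ^ 2) / 2)) := by
  have := integrable_exp_neg_mul_sq (b := (1/2 : ℝ)) (by norm_num)
  convert this using 2 with t; ring_nf

lemma gauss_total : ∫ t : ℝ, Real.exp (-(t ^ 2) / 2) = Real.sqrt (2 * Real.pi) := by
  have := integral_gaussian (1/2 : ℝ)
  rw [show Real.pi / (1/2 : ℝ) = 2 * Real.pi by ring] at this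
  rw [← this]; congr 1 with t; ring_nf

noncomputable def npdf (t : ℝ) : ℝ := Real.exp (-(t ^ 2) / 2) / Real.sqrt (2 * Real.pi)

lemma npdf_pos (t : ℝ) : 0 < npdf t :=
  div_pos (Real.exp_pos _) (Real.sqrt_pos.2 (by positivity))

lemma npdf_integrable : Integrable npdf := gauss_integrable.div_const _

lemma npdf_total : ∫ t : ℝ, npdf t = 1 := by
  unfold npdf
  rw [integral_div, gauss_total, div_self (by positivity)]

lemma stdNormalCDF_eq (x : ℝ) : stdNormalCDF x = ∫ t in Iic x, npdf t := rfl

lemma cdf_add_tail (y : ℝ) :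
    stdNormalCDF y + ∫ t in Ioi y, npdf t = 1 := by
  rw [stdNormalCDF_eq, intervalIntegral.integral_Iic_add_Ioi npdf_integrable.integrableOn
    npdf_integrable.integrableOn, npdf_total]

lemma tail_eq (y : ℝ) : 1 - stdNormalCDF y = ∫ t in Ioi y, npdf t := by
  linarith [cdf_add_tail y]

lemma tail_pos (y : ℝ) : 0 < ∫ t in Ioi y, npdf t := by
  rw [setIntegral_pos_iff_support_of_nonneg_ae
    (Filter.Eventually.of_forall fun t => (npdf_pos t).le)
    npdf_integrable.integrableOn]
  have hs : Function.support npdf = univ := by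
    ext t; simp [Function.support, (npdf_pos t).ne']
  rw [hs]
  simp

lemma cdf_lt_one (y : ℝ) : stdNormalCDF y < 1 := by
  have := tail_pos y; have := tail_eq y; linarith

lemma cdf_strictMono : StrictMono stdNormalCDF := by
  intro y z hyz
  have h1 : stdNormalCDF z - stdNormalCDF y = ∫ t in y..z, npdf t := by
    rw [stdNormalCDF_eq, stdNormalCDF_eq,
      intervalIntegral.integral_Iic_sub_Iic npdf_integrable.integrableOn
        npdf_integrable.integrableOn]
  have h2 : 0 < ∫ t in y..z, npdf t :=
    intervalIntegral.intervalIntegral_pos_of_pos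
      npdf_integrable.intervalIntegrable npdf_pos hyz
  linarith

lemma integral_Ioi_translate (g : ℝ → ℝ) (t μ : ℝ) :
    ∫ q in Ioi t, g (q - μ) = ∫ s in Ioi (t - μ), g s := by
  have hmp : MeasurePreserving (fun x : ℝ => x + μ) volume volume :=
    measurePreserving_add_right volume μ
  have hemb : MeasurableEmbedding (fun x : ℝ => x + μ) :=
    (Homeomorph.addRight μ).measurableEmbedding
  have h := hmp.setIntegral_preimage_emb hemb (fun y => g (y - μ)) (Ioi t)
  have hpre : (fun x : ℝ => x + μ) ⁻¹' Ioi t = Ioi (t - μ) := by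
    ext x; simp [sub_lt_iff_lt_add]
  rw [hpre] at h
  simpa using h.symm

lemma gauss_sub (t μ σ : ℝ) (hσ : 0 < σ) :
    ∫ q in Ioi t, Real.exp (-((q - μ) ^ 2) / (2 * σ ^ 2)) =
      σ * ∫ u in Ioi ((t - μ) / σ), Real.exp (-(u ^ 2) / 2) := by
  rw [integral_Ioi_translate (fun s => Real.exp (-(s ^ 2) / (2 * σ ^ 2))) t μ]
  have h := integral_comp_mul_left_Ioi (fun u => Real.exp (-(u ^ 2) / 2)) (t - μ)
    (b := 1/σ) (by positivity)
  simp only [smul_eq_mul] at h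
  have e1 : ∀ x : ℝ, Real.exp (-((1/σ) * x) ^ 2 / 2) = Real.exp (-(x ^ 2) / (2 * σ ^ 2)) := by
    intro x
    have h2 : ((1/σ)*x)^2 = x^2/σ^2 := by
      rw [mul_pow, div_pow, one_pow, div_mul_eq_mul_div, one_mul]
    rw [h2, neg_div, div_div, neg_div, mul_comm (σ^2) 2]
  rw [show (1/σ : ℝ) * (t - μ) = (t - μ)/σ by ring, show ((1/σ:ℝ))⁻¹ = σ by simp] at h
  rw [← h]
  congr 1 with x
  exact (e1 x).symm

lemma gauss_tail_eq (t μ σ : ℝ) (hσ : 0 < σ) :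
    ∫ q in Ioi t, Real.exp (-((q - μ) ^ 2) / (2 * σ ^ 2)) =
      σ * Real.sqrt (2 * Real.pi) * (1 - stdNormalCDF ((t - μ) / σ)) := by
  rw [gauss_sub t μ σ hσ, tail_eq]
  unfold npdf
  rw [integral_div]
  have : Real.sqrt (2 * Real.pi) ≠ 0 := by positivity
  field_simp

end V2IAux

open V2IAux

/-- Proposition 1 (V2I transmission only, unclamped form): the outage constraint
`P{ r(p) < q·v } ≤ δ` holds iff `p ≥ (1/c)·(exp(v·(σ·x + μ)·ln 2 / B + a) − 1)`. -/
theorem v2i_outage_constraint_iff (B c v a μ σ δ x : ℝ)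
    (hB : 0 < B) (hc : 0 < c) (hv : 0 < v) (hσ : 0 < σ)
    (hδ : δ ∈ Set.Ioo (0 : ℝ) 1)
    (hx : stdNormalCDF x = 1 - δ * (1 - stdNormalCDF (-μ / σ)))
    (hpos : 0 ≤ μ + σ * x)
    (r : ℝ → ℝ)
    (hr : ∀ p, r p = (B / Real.log 2) * (Real.log (1 + c * p) - a))
    (f : ℝ → ℝ)
    (hf : ∀ q, f q = Real.exp (-((q - μ) ^ 2) / (2 * σ ^ 2)) /
        (Real.sqrt (2 * Real.pi) * σ * (1 - stdNormalCDF (-μ / σ))))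
    (p : ℝ) (hp : 0 ≤ p) :
    (∫ q in {q : ℝ | 0 ≤ q ∧ r p < q * v}, f q) ≤ δ ↔
      p ≥ (1 / c) * (Real.exp (v * (σ * x + μ) * Real.log 2 / B + a) - 1) := by
  obtain ⟨hδ0, hδ1⟩ := hδ
  set Z : ℝ := 1 - stdNormalCDF (-μ / σ) with hZ
  have hZpos : 0 < Z := by have := cdf_lt_one (-μ / σ); simp [hZ]; linarith
  -- μ + σx > 0
  have hpos' : 0 < μ + σ * x := by
    rcases hpos.lt_or_eq with h | h
    · exact h
    · exfalso
      have hxe : x = -μ / σ := by field_simp; linarith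
      rw [hxe] at hx
      have : (1 - δ) * Z = 0 := by rw [hZ]; ring_nf; rw [hZ] at hx; ring_nf at hx; linarith
      rcases mul_eq_zero.1 this with h' | h' <;> nlinarith
  set t0 : ℝ := max 0 (r p / v) with ht0
  -- the set integral equals the tail integral from t0
  have hsetint : (∫ q in {q : ℝ | 0 ≤ q ∧ r p < q * v}, f q) = ∫ q in Ioi t0, f q := by
    rcases le_or_gt 0 (r p / v) with hge | hlt
    · have hseq : {q : ℝ | 0 ≤ q ∧ r p < q * v} = Ioi (r p / v) := by
        ext q
        simp only [mem_setOf_eq, mem_Ioi]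
        constructor
        · rintro ⟨-, h2⟩; exact (div_lt_iff₀ hv).2 (by linarith [mul_comm q v])
        · intro h; exact ⟨le_of_lt (lt_of_le_of_lt hge h),
            by have := (div_lt_iff₀ hv).1 h; linarith [mul_comm q v]⟩
      rw [hseq, ht0, max_eq_right hge]
    · have hseq : {q : ℝ | 0 ≤ q ∧ r p < q * v} = Ici 0 := by
        ext q
        simp only [mem_setOf_eq, mem_Ici]
        constructor
        · exact fun h => h.1
        · intro h
          refine ⟨h, ?_⟩
          have hrp : r p < 0 := by
            by_contra hcon
            exact absurd (div_nonneg (not_lt.1 hcon) hv.le) (not_le.2 hlt)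
          nlinarith
      rw [hseq, ht0, max_eq_left hlt.le]
      exact setIntegral_congr_set (Ioi_ae_eq_Ici (a := (0:ℝ))).symm
  -- compute tail integral of f
  have htail : (∫ q in Ioi t0, f q) = (1 - stdNormalCDF ((t0 - μ) / σ)) / Z := by
    have : (∫ q in Ioi t0, f q)
        = (∫ q in Ioi t0, Real.exp (-((q - μ) ^ 2) / (2 * σ ^ 2))) /
          (Real.sqrt (2 * Real.pi) * σ * Z) := by
      rw [← integral_div]; exact setIntegral_congr_fun measurableSet_Ioi fun q _ => hf q
    rw [this, gauss_tail_eq t0 μ σ hσ]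
    have h1 : Real.sqrt (2 * Real.pi) ≠ 0 := by positivity
    field_simp
  rw [hsetint, htail]
  -- main chain of equivalences
  have step1 : (1 - stdNormalCDF ((t0 - μ) / σ)) / Z ≤ δ ↔ x ≤ (t0 - μ) / σ := by
    rw [div_le_iff₀ hZpos]
    constructor
    · intro h
      have hΦ : stdNormalCDF x ≤ stdNormalCDF ((t0 - μ) / σ) := by
        rw [hx]; linarith
      exact cdf_strictMono.le_iff_le.1 hΦ
    · intro h
      have hΦ : stdNormalCDF x ≤ stdNormalCDF ((t0 - μ) / σ) :=
        cdf_strictMono.le_iff_le.2 h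
      rw [hx] at hΦ; linarith
  rw [step1]
  have step2 : x ≤ (t0 - μ) / σ ↔ μ + σ * x ≤ t0 := by
    rw [le_div_iff₀ hσ]; constructor <;> intro h <;> nlinarith
  rw [step2]
  have step3 : μ + σ * x ≤ t0 ↔ μ + σ * x ≤ r p / v := by
    rw [ht0, le_max_iff]
    constructor
    · rintro (h | h)
      · linarith
      · exact h
    · exact Or.inr
  rw [step3]
  have hcp : (0:ℝ) < 1 + c * p := by nlinarith
  have hlog2 : (0:ℝ) < Real.log 2 := Real.log_pos (by norm_num)
  have hBl : 0 < B / Real.log 2 := div_pos hB hlog2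
  have hkey : (μ + σ * x) * v / (B / Real.log 2) = v * (σ * x + μ) * Real.log 2 / B := by
    rw [div_div_eq_mul_div]; congr 1; ring
  have step4 : μ + σ * x ≤ r p / v ↔
      v * (σ * x + μ) * Real.log 2 / B + a ≤ Real.log (1 + c * p) := by
    rw [le_div_iff₀ hv, hr p]
    constructor
    · intro h
      have h' : (μ + σ * x) * v / (B / Real.log 2) ≤ Real.log (1 + c * p) - a :=
        (div_le_iff₀ hBl).2
          (by linarith [mul_comm (B / Real.log 2) (Real.log (1 + c * p) - a)])
      rw [hkey] at h'; linarith
    · intro h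
      have h' : (μ + σ * x) * v / (B / Real.log 2) ≤ Real.log (1 + c * p) - a := by
        rw [hkey]; linarith
      have h2 := (div_le_iff₀ hBl).1 h'
      linarith [mul_comm (Real.log (1 + c * p) - a) (B / Real.log 2)]
  rw [step4, Real.le_log_iff_exp_le hcp, ge_iff_le, one_div, inv_mul_le_iff₀ hc]
  constructor <;> intro h <;> linarith
end

section
/- (Proposition 2, V2V transmission only, unclamped form.) Let B_V > 0, c_V > 0, v > 0, a_V ∈ ℝ, μ ∈ ℝ, σ > 0, δ ∈ (0,1), and let Φ denote the cumulative distribution function of the standard normal distribution. Let x ∈ ℝ satisfy Φ(x) = 1 - δ·(1 - Φ(-μ/σ)), and assume μ + σ·x ≥ 0. Define the vehicle's transmission rate r_V(p) = (B_V/ln 2)·(ln(1 + c_V·p) − a_V) for p ≥ 0, and let q be a random variable distributed with the truncated Gaussian density f(q) = exp(-(q-μ)²/(2σ²)) / (√(2π)·σ·(1-Φ(-μ/σ))) on [0,∞). Then for every p ≥ 0, the outage constraint P{ r_V(p) < q·v } ≤ δ holds if and only if p ≥ (1/c_V)·( exp( v·(σ·x + μ)·(ln 2)/B_V + a_V ) −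 1 ). -/
open MeasureTheory Set

/-- The standard normal density. -/
noncomputable def stdG (t : ℝ) : ℝ := Real.exp (-(t ^ 2) / 2) / Real.sqrt (2 * Real.pi)

lemma stdG_pos (t : ℝ) : 0 < stdG t :=
  div_pos (Real.exp_pos _) (Real.sqrt_pos.mpr (by positivity))

lemma stdG_eq : stdG = fun x => Real.exp (-(1/2 : ℝ) * x ^ 2) / Real.sqrt (2 * Real.pi) := by
  funext t
  unfold stdG
  rw [show -(t ^ 2) / 2 = -(1/2 : ℝ) * t ^ 2 by ring]

lemma integrable_stdG : Integrable stdG := by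
  rw [stdG_eq]
  exact (integrable_exp_neg_mul_sq (by norm_num)).div_const _

lemma integral_stdG : ∫ t, stdG t = 1 := by
  rw [stdG_eq]
  rw [integral_div, integral_gaussian, show Real.pi / (1/2 : ℝ) = 2 * Real.pi by ring]
  exact div_self (ne_of_gt (Real.sqrt_pos.mpr (by positivity)))

lemma stdNormalCDF_eq (y : ℝ) : stdNormalCDF y = ∫ t in Set.Iic y, stdG t := rfl

lemma integral_Ioi_stdG (y : ℝ) : ∫ t in Set.Ioi y, stdG t = 1 - stdNormalCDF y := by
  have h := intervalIntegral.integral_Iic_add_Ioi (b := y) (f := stdG) (μ := volume)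
    integrable_stdG.integrableOn integrable_stdG.integrableOn
  rw [integral_stdG, ← stdNormalCDF_eq] at h
  linarith

lemma stdNormalCDF_lt_one (y : ℝ) : stdNormalCDF y < 1 := by
  have h : 0 < ∫ t in Set.Ioi y, stdG t := by
    rw [setIntegral_pos_iff_support_of_nonneg_ae
      (Filter.Eventually.of_forall fun t => (stdG_pos t).le) integrable_stdG.integrableOn]
    have hs : Function.support stdG = Set.univ := by
      ext t; simp [Function.support, (stdG_pos t).ne']
    rw [hs, Set.univ_inter, Real.volume_Ioi]
    exact ENNReal.zero_lt_top
  rw [integral_Ioi_stdG] at h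
  linarith

lemma stdNormalCDF_strictMono : StrictMono stdNormalCDF := by
  intro a b hab
  have hsplit : stdNormalCDF b = stdNormalCDF a + ∫ t in Set.Ioc a b, stdG t := by
    rw [stdNormalCDF_eq, stdNormalCDF_eq,
      ← setIntegral_union (Set.Iic_disjoint_Ioc le_rfl) measurableSet_Ioc
        integrable_stdG.integrableOn integrable_stdG.integrableOn,
      Set.Iic_union_Ioc_eq_Iic hab.le]
  have hpos : 0 < ∫ t in Set.Ioc a b, stdG t := by
    rw [setIntegral_pos_iff_support_of_nonneg_ae
      (Filter.Eventually.of_forall fun t => (stdG_pos t).le) integrable_stdG.integrableOn]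
    have hs : Function.support stdG = Set.univ := by
      ext t; simp [Function.support, (stdG_pos t).ne']
    rw [hs, Set.univ_inter, Real.volume_Ioc]
    exact ENNReal.ofReal_pos.mpr (by linarith)
  linarith

lemma integral_Ioi_comp_add_right (g : ℝ → ℝ) (a d : ℝ) :
    ∫ x in Set.Ioi a, g (x + d) = ∫ x in Set.Ioi (a + d), g x := by
  rw [← integral_indicator measurableSet_Ioi, ← integral_indicator measurableSet_Ioi,
    ← integral_add_right_eq_self ((Set.Ioi (a + d)).indicator g) d]
  congr 1
  funext x
  simp [Set.indicator_apply, Set.mem_Ioi, add_lt_add_iff_right]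

lemma integral_stdG_comp (μ σ : ℝ) (hσ : 0 < σ) (m : ℝ) :
    ∫ q in Set.Ioi m, stdG ((q - μ) / σ) = σ * (1 - stdNormalCDF ((m - μ) / σ)) := by
  have h1 : ∀ q : ℝ, stdG ((q - μ) / σ) = (fun y => stdG (y + -(μ / σ))) (q * σ⁻¹) := by
    intro q
    simp only
    congr 1
    field_simp
    ring
  simp_rw [h1]
  rw [MeasureTheory.integral_comp_mul_right_Ioi (fun y => stdG (y + -(μ / σ))) m
    (inv_pos.mpr hσ), integral_Ioi_comp_add_right stdG (m * σ⁻¹) (-(μ / σ)),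
    show m * σ⁻¹ + -(μ / σ) = (m - μ) / σ by field_simp; ring,
    integral_Ioi_stdG, inv_inv, smul_eq_mul]

/-- Proposition 2 (V2V transmission only, unclamped form): the outage constraint
`P{ r_V(p) < q·v } ≤ δ` holds iff `p ≥ (1/c_V)·(exp(v·(σ·x + μ)·ln 2 / B_V + a_V) − 1)`. -/
theorem v2v_outage_constraint_iff (B_V c_V v a_V μ σ δ x : ℝ)
    (hB : 0 < B_V) (hc : 0 < c_V) (hv : 0 < v) (hσ : 0 < σ)
    (hδ : δ ∈ Set.Ioo (0 : ℝ) 1)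
    (hx : stdNormalCDF x = 1 - δ * (1 - stdNormalCDF (-μ / σ)))
    (hpos : 0 ≤ μ + σ * x)
    (r_V : ℝ → ℝ)
    (hr : ∀ p, r_V p = (B_V / Real.log 2) * (Real.log (1 + c_V * p) - a_V))
    (f : ℝ → ℝ)
    (hf : ∀ q, f q = Real.exp (-((q - μ) ^ 2) / (2 * σ ^ 2)) /
        (Real.sqrt (2 * Real.pi) * σ * (1 - stdNormalCDF (-μ / σ))))
    (p : ℝ) (hp : 0 ≤ p) :
    (∫ q in {q : ℝ | 0 ≤ q ∧ r_V p < q * v}, f q) ≤ δ ↔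
      p ≥ (1 / c_V) * (Real.exp (v * (σ * x + μ) * Real.log 2 / B_V + a_V) - 1) := by
  obtain ⟨hδ0, hδ1⟩ := hδ
  set K : ℝ := 1 - stdNormalCDF (-μ / σ) with hK_def
  have hK : 0 < K := by
    have := stdNormalCDF_lt_one (-μ / σ); simp only [hK_def]; linarith
  set T : ℝ := r_V p / v with hT_def
  set m : ℝ := max T 0 with hm_def
  -- f in terms of stdG
  have hfq : ∀ q : ℝ, f q = stdG ((q - μ) / σ) * (σ * K)⁻¹ := by
    intro q
    rw [hf q]
    unfold stdG
    rw [show -(((q - μ) / σ) ^ 2) / 2 = -((q - μ) ^ 2) / (2 * σ ^ 2) by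
      ring]
    rw [← div_eq_mul_inv, div_div, mul_assoc]
  -- the set
  have hSet : {q : ℝ | 0 ≤ q ∧ r_V p < q * v} = Set.Ici 0 ∩ Set.Ioi T := by
    ext q
    simp only [Set.mem_setOf_eq, Set.mem_inter_iff, Set.mem_Ici, Set.mem_Ioi, hT_def,
      div_lt_iff₀ hv]
  have hIoiInt : ∀ s : ℝ, ∫ q in Set.Ioi s, f q = (1 - stdNormalCDF ((s - μ) / σ)) / K := by
    intro s
    simp_rw [hfq]
    rw [integral_mul_const, integral_stdG_comp μ σ hσ s]
    field_simp
  have hI : (∫ q in {q : ℝ | 0 ≤ q ∧ r_V p < q * v}, f q)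
      = (1 - stdNormalCDF ((m - μ) / σ)) / K := by
    rw [hSet]
    rcases le_or_gt 0 T with h | h
    · have : Set.Ici (0:ℝ) ∩ Set.Ioi T = Set.Ioi T := by
        apply Set.inter_eq_right.mpr
        intro q hq
        exact le_trans h (le_of_lt hq)
      rw [this, hm_def, max_eq_left h, hIoiInt]
    · have : Set.Ici (0:ℝ) ∩ Set.Ioi T = Set.Ici 0 := by
        apply Set.inter_eq_left.mpr
        intro q hq
        exact lt_of_lt_of_le h hq
      rw [this, integral_Ici_eq_integral_Ioi, hm_def, max_eq_right h.le, hIoiInt]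
  rw [hI]
  -- μ + σ x is strictly positive
  have hcpos : 0 < μ + σ * x := by
    have hlt : stdNormalCDF (-μ / σ) < stdNormalCDF x := by
      rw [hx]
      nlinarith [stdNormalCDF_lt_one (-μ / σ)]
    have hxx : -μ / σ < x := stdNormalCDF_strictMono.lt_iff_lt.mp hlt
    have := (div_lt_iff₀ hσ).mp hxx
    nlinarith
  -- chain of equivalences
  have e1 : (1 - stdNormalCDF ((m - μ) / σ)) / K ≤ δ ↔ x ≤ (m - μ) / σ := by
    rw [div_le_iff₀ hK]
    constructor
    · intro h
      apply stdNormalCDF_strictMono.le_iff_le.mp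
      rw [hx]; simp only [hK_def] at h ⊢; linarith
    · intro h
      have := stdNormalCDF_strictMono.le_iff_le.mpr h
      rw [hx] at this; simp only [hK_def] at this ⊢; linarith
  have e2 : x ≤ (m - μ) / σ ↔ μ + σ * x ≤ m := by
    rw [le_div_iff₀ hσ]
    constructor <;> intro <;> nlinarith
  have e3 : μ + σ * x ≤ m ↔ μ + σ * x ≤ T := by
    rw [hm_def, le_max_iff]
    constructor
    · rintro (h | h)
      · exact h
      · linarith
    · exact Or.inl
  have hlog2 : 0 < Real.log 2 := Real.log_pos one_lt_two
  have h1p : 0 < 1 + c_V * p := by nlinarith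
  have key : ∀ L : ℝ, (μ + σ * x) * v ≤ (B_V / Real.log 2) * (L - a_V) ↔
      v * (σ * x + μ) * Real.log 2 / B_V + a_V ≤ L := by
    intro L
    rw [mul_comm (B_V / Real.log 2), ← div_le_iff₀ (by positivity : (0:ℝ) < B_V / Real.log 2),
      show (μ + σ * x) * v / (B_V / Real.log 2) = v * (σ * x + μ) * Real.log 2 / B_V by
        rw [div_div_eq_mul_div]; ring]
    constructor <;> intro <;> linarith
  have e4 : μ + σ * x ≤ T ↔
      p ≥ (1 / c_V) * (Real.exp (v * (σ * x + μ) * Real.log 2 / B_V + a_V) - 1) := by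
    rw [hT_def, ge_iff_le, le_div_iff₀ hv, hr p, key (Real.log (1 + c_V * p)),
      Real.le_log_iff_exp_le h1p, one_div, inv_mul_le_iff₀ hc]
    constructor <;> intro <;> linarith
  exact ((e1.trans e2).trans e3).trans e4
end

section
/- (Cooperative outage-constraint transformation.) Let B_R, B_V, c_R, c_V, v > 0, a_R, a_V ∈ ℝ, μ ∈ ℝ, σ > 0, δ ∈ (0,1), and let Φ denote the cumulative distribution function of the standard normal distribution. Let x ∈ ℝ satisfy Φ(x) = 1 - δ·(1 - Φ(-μ/σ)), and assume μ + σ·x ≥ 0. Define r_R(p) = (B_R/ln 2)·(ln(1 + c_R·p) − a_R), r_V(p) = (B_V/ln 2)·(ln(1 + c_V·p) − a_V), χ = (v·(σ·x + μ)·ln 2 + B_R·a_R + B_V·a_V)/B_R, and g(p) = (1/c_R)·( e^χ·(1 + c_V·p)^(−B_V/B_R) − 1 ). Let q be a random variable distributed with the truncated Gaussian density f(q) = exp(-(q-μ)²/(2σ²)) / (√(2π)·σ·(1-Φ(-μ/σ))) on [0,∞). Then for all p_R ≥ 0 and p_V ≥ 0, the outage constraint P{ r_R(p_R) + r_V(p_V)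 < q·v } ≤ δ holds if and only if p_R ≥ g(p_V). -/
open MeasureTheory Set

namespace OutageAux

noncomputable def φ (t : ℝ) : ℝ := Real.exp (-(t ^ 2) / 2) / Real.sqrt (2 * Real.pi)

lemma φ_pos (t : ℝ) : 0 < φ t :=
  div_pos (Real.exp_pos _) (Real.sqrt_pos.mpr (by positivity))

lemma φ_eq : φ = fun t => Real.exp (-(1/2) * t ^ 2) / Real.sqrt (2 * Real.pi) := by
  funext t
  unfold φ
  congr 1
  ring_nf

lemma integrable_φ : Integrable φ := by
  rw [φ_eq]
  exact (integrable_exp_neg_mul_sq (by norm_num)).div_const _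

lemma integral_φ : ∫ t, φ t = 1 := by
  rw [φ_eq, integral_div, integral_gaussian]
  rw [show Real.pi / (1/2) = 2 * Real.pi by ring]
  exact div_self (ne_of_gt (Real.sqrt_pos.mpr (by positivity)))

lemma cdf_eq (a : ℝ) : stdNormalCDF a = ∫ t in Iic a, φ t := rfl

lemma tail_eq (a : ℝ) : ∫ t in Ioi a, φ t = 1 - stdNormalCDF a := by
  have h := intervalIntegral.integral_Iic_add_Ioi (μ := volume) (b := a)
    integrable_φ.integrableOn integrable_φ.integrableOn
  rw [integral_φ] at h
  rw [cdf_eq]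
  linarith

lemma cdf_strictMono : StrictMono stdNormalCDF := by
  intro a b hab
  have h1 : stdNormalCDF b - stdNormalCDF a = ∫ t in a..b, φ t := by
    rw [cdf_eq, cdf_eq]
    exact intervalIntegral.integral_Iic_sub_Iic integrable_φ.integrableOn integrable_φ.integrableOn
  have h2 : 0 < ∫ t in a..b, φ t :=
    intervalIntegral.intervalIntegral_pos_of_pos_on integrable_φ.intervalIntegrable
      (fun t _ => φ_pos t) hab
  linarith

lemma tail_pos (a : ℝ) : 0 < ∫ t in Ioi a, φ t := by
  rw [setIntegral_pos_iff_support_of_nonneg_ae (ae_of_all _ fun t => (φ_pos t).le)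
    integrable_φ.integrableOn]
  have hs : Function.support φ = univ := eq_univ_of_forall fun t => (φ_pos t).ne'
  rw [hs, univ_inter, Real.volume_Ioi]
  simp

lemma cdf_lt_one (a : ℝ) : stdNormalCDF a < 1 := by
  have := tail_pos a
  rw [tail_eq] at this
  linarith

lemma integral_comp_add_right_Ioi (g : ℝ → ℝ) (a c : ℝ) :
    (∫ x in Ioi a, g (x + c)) = ∫ x in Ioi (a + c), g x := by
  rw [← integral_indicator measurableSet_Ioi, ← integral_indicator measurableSet_Ioi,
    ← integral_add_right_eq_self (fun x => (Ioi (a + c)).indicator g x) c]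
  congr 1
  ext x
  simp only [Set.indicator_apply, mem_Ioi]
  by_cases h : a < x
  · rw [if_pos h, if_pos (by linarith)]
  · rw [if_neg h, if_neg (fun hc => h (by linarith))]

lemma gauss_sub (M μ σ : ℝ) (hσ : 0 < σ) :
    ∫ q in Ioi M, φ ((q - μ) / σ) = σ * ∫ t in Ioi ((M - μ) / σ), φ t := by
  have h := integral_comp_add_right_Ioi (fun q => φ ((q - μ) / σ)) (M - μ) μ
  simp only [add_sub_cancel_right, sub_add_cancel, div_eq_inv_mul] at h ⊢
  rw [← h, integral_comp_mul_left_Ioi φ (M - μ) (inv_pos.mpr hσ), smul_eq_mul, inv_inv]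

end OutageAux

open OutageAux

/-- Cooperative outage-constraint transformation: the outage constraint
`P{ r_R(p_R) + r_V(p_V) < q·v } ≤ δ` holds iff `p_R ≥ g(p_V)`. -/
theorem cooperative_outage_constraint_iff (B_R B_V c_R c_V v a_R a_V μ σ δ x : ℝ)
    (hBR : 0 < B_R) (hBV : 0 < B_V) (hcR : 0 < c_R) (hcV : 0 < c_V)
    (hv : 0 < v) (hσ : 0 < σ) (hδ : δ ∈ Set.Ioo (0 : ℝ) 1)
    (hx : stdNormalCDF x = 1 - δ * (1 - stdNormalCDF (-μ / σ)))
    (hpos : 0 ≤ μ + σ * x)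
    (r_R r_V : ℝ → ℝ)
    (hrR : ∀ p, r_R p = (B_R / Real.log 2) * (Real.log (1 + c_R * p) - a_R))
    (hrV : ∀ p, r_V p = (B_V / Real.log 2) * (Real.log (1 + c_V * p) - a_V))
    (χ : ℝ)
    (hχ : χ = (v * (σ * x + μ) * Real.log 2 + B_R * a_R + B_V * a_V) / B_R)
    (g : ℝ → ℝ)
    (hg : ∀ p, g p = (1 / c_R) * (Real.exp χ * (1 + c_V * p) ^ (-(B_V / B_R)) - 1))
    (f : ℝ → ℝ)
    (hf : ∀ q, f q = Real.exp (-((q - μ) ^ 2) / (2 * σ ^ 2)) /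
        (Real.sqrt (2 * Real.pi) * σ * (1 - stdNormalCDF (-μ / σ))))
    (p_R p_V : ℝ) (hpR : 0 ≤ p_R) (hpV : 0 ≤ p_V) :
    (∫ q in {q : ℝ | 0 ≤ q ∧ r_R p_R + r_V p_V < q * v}, f q) ≤ δ ↔
      p_R ≥ g p_V := by
  obtain ⟨hδ0, hδ1⟩ := hδ
  set K : ℝ := 1 - stdNormalCDF (-μ / σ) with hK_def
  have hK : 0 < K := by
    rw [hK_def]
    have := cdf_lt_one (-μ / σ)
    linarith
  set R : ℝ := r_R p_R + r_V p_V with hR_def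
  set T : ℝ := R / v with hT_def
  set M : ℝ := max T 0 with hM_def
  -- strict positivity of μ + σ x
  have hs : 0 < μ + σ * x := by
    rcases hpos.lt_or_eq with h | h
    · exact h
    · exfalso
      have hxeq : x = -μ / σ := by field_simp; linarith
      rw [hxeq] at hx
      have h1 : stdNormalCDF (-μ / σ) < 1 := cdf_lt_one _
      nlinarith
  -- f as scaled standard density
  have hfφ : f = fun q => φ ((q - μ) / σ) * (σ * K)⁻¹ := by
    funext q
    rw [hf]
    unfold φ
    rw [div_pow, show -((q - μ) ^ 2 / σ ^ 2) / 2 = -(q - μ) ^ 2 / (2 * σ ^ 2) by ring,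
      ← div_eq_mul_inv, div_div, mul_assoc]
  -- rewrite the integration set
  have hset : (∫ q in {q : ℝ | 0 ≤ q ∧ R < q * v}, f q) = ∫ q in Ioi M, f q := by
    rcases le_or_gt 0 T with h | h
    · have hMT : M = T := max_eq_left h
      have hSet : {q : ℝ | 0 ≤ q ∧ R < q * v} = Ioi T := by
        ext q
        simp only [mem_setOf_eq, mem_Ioi]
        constructor
        · rintro ⟨_, h2⟩
          exact (div_lt_iff₀ hv).mpr h2
        · intro h2
          exact ⟨le_trans h (le_of_lt h2), (div_lt_iff₀ hv).mp h2⟩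
      rw [hSet, hMT]
    · have hM0 : M = 0 := max_eq_right h.le
      have hSet : {q : ℝ | 0 ≤ q ∧ R < q * v} = Ici 0 := by
        ext q
        simp only [mem_setOf_eq, mem_Ici]
        constructor
        · exact fun hq => hq.1
        · intro hq
          refine ⟨hq, ?_⟩
          have hRneg : R < 0 := by
            have h2 : T * v < 0 := mul_neg_of_neg_of_pos h hv
            rwa [hT_def, div_mul_cancel₀ _ (ne_of_gt hv)] at h2
          nlinarith
      rw [hSet, hM0, integral_Ici_eq_integral_Ioi]
  -- compute the integral
  have hP : (∫ q in Ioi M, f q) = (1 - stdNormalCDF ((M - μ) / σ)) / K := by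
    rw [hfφ, integral_mul_const, gauss_sub M μ σ hσ, tail_eq]
    field_simp
  rw [hset, hP]
  -- probability inequality ↔ threshold inequality
  have step1 : (1 - stdNormalCDF ((M - μ) / σ)) / K ≤ δ ↔ μ + σ * x ≤ M := by
    rw [div_le_iff₀ hK]
    constructor
    · intro h
      have hΦ : stdNormalCDF x ≤ stdNormalCDF ((M - μ) / σ) := by
        rw [hx]; linarith
      have hxd : x ≤ (M - μ) / σ := cdf_strictMono.le_iff_le.mp hΦ
      have := (le_div_iff₀ hσ).mp hxd
      linarith
    · intro h
      have hxd : x ≤ (M - μ) / σ := (le_div_iff₀ hσ).mpr (by linarith)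
      have hΦ : stdNormalCDF x ≤ stdNormalCDF ((M - μ) / σ) :=
        cdf_strictMono.le_iff_le.mpr hxd
      rw [hx] at hΦ
      linarith
  rw [step1]
  -- max reduction
  have step2 : μ + σ * x ≤ M ↔ μ + σ * x ≤ T := by
    rw [hM_def, le_max_iff]
    constructor
    · rintro (h | h)
      · exact h
      · linarith
    · exact Or.inl
  rw [step2, hT_def, le_div_iff₀ hv]
  -- algebra
  have hln2 : 0 < Real.log 2 := Real.log_pos (by norm_num)
  have h1R : 0 < 1 + c_R * p_R := by nlinarith
  have h1V : 0 < 1 + c_V * p_V := by nlinarith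
  set L_R : ℝ := Real.log (1 + c_R * p_R) with hLR
  set L_V : ℝ := Real.log (1 + c_V * p_V) with hLV
  have hReq : R * Real.log 2 = B_R * L_R + B_V * L_V - (B_R * a_R + B_V * a_V) := by
    rw [hR_def, hrR, hrV]
    field_simp
    ring
  have hχ' : B_R * χ = v * (σ * x + μ) * Real.log 2 + B_R * a_R + B_V * a_V := by
    rw [hχ]
    field_simp
  have hcomm : (μ + σ * x) * v * Real.log 2 = v * (σ * x + μ) * Real.log 2 := by ring
  have step3 : (μ + σ * x) * v ≤ R ↔ B_R * χ ≤ B_R * L_R + B_V * L_V := by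
    constructor
    · intro h
      have h2 := (mul_le_mul_iff_of_pos_right hln2).mpr h
      rw [hReq] at h2
      linarith
    · intro h
      have h2 : (μ + σ * x) * v * Real.log 2 ≤ R * Real.log 2 := by
        rw [hReq]; linarith
      exact le_of_mul_le_mul_right h2 hln2
  rw [step3]
  have step4 : B_R * χ ≤ B_R * L_R + B_V * L_V ↔ χ - (B_V / B_R) * L_V ≤ L_R := by
    have h3 : B_R * (χ - B_V / B_R * L_V) = B_R * χ - B_V * L_V := by
      field_simp
    constructor
    · intro h
      refine le_of_mul_le_mul_left ?_ hBR
      rw [h3]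
      linarith
    · intro h
      have h4 := mul_le_mul_of_nonneg_left h hBR.le
      rw [h3] at h4
      linarith
  rw [step4]
  have hexp : Real.exp (χ - B_V / B_R * L_V) =
      Real.exp χ * (1 + c_V * p_V) ^ (-(B_V / B_R)) := by
    rw [Real.exp_sub, Real.rpow_def_of_pos h1V, div_eq_mul_inv, ← Real.exp_neg]
    congr 1
    rw [Real.exp_eq_exp]
    ring
  have step5 : χ - B_V / B_R * L_V ≤ L_R ↔ g p_V ≤ p_R := by
    rw [hLR, Real.le_log_iff_exp_le h1R, hexp, hg, one_div, ← div_eq_inv_mul,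
      div_le_iff₀ hcR]
    constructor <;> intro h <;> linarith [mul_comm p_R c_R]
  rw [step5, ge_iff_le]
end

section
/- Let A > 0, c > 0, β > 0 and χ ∈ ℝ, and define g(p) = A·(e^χ·(1 + c·p)^(−β) − 1) for p ∈ ℝ with 1 + c·p > 0. Suppose A·c·β·e^χ ≥ 1, and set p* = (1/c)·( (A·c·β·e^χ)^(1/(β+1)) − 1 ), so that p* ≥ 0. Then g is differentiable at p* and g′(p*) = −1. -/
/-- At `p* = (1/c)·((A·c·β·e^χ)^(1/(β+1)) − 1)` with `A·c·β·e^χ ≥ 1`, one has `p* ≥ 0`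
and `g(p) = A·(e^χ·(1 + c·p)^(−β) − 1)` is differentiable at `p*` with derivative `−1`. -/
theorem g_hasDerivAt_neg_one (A c β χ : ℝ) (hA : 0 < A) (hc : 0 < c) (hβ : 0 < β)
    (hcond : 1 ≤ A * c * β * Real.exp χ)
    (pstar : ℝ)
    (hpstar : pstar = (1 / c) * ((A * c * β * Real.exp χ) ^ (1 / (β + 1)) - 1)) :
    0 ≤ pstar ∧
      HasDerivAt (fun p : ℝ => A * (Real.exp χ * (1 + c * p) ^ (-β) - 1)) (-1) pstar := by
  set K := A * c * β * Real.exp χ with hK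
  have hKpos : 0 < K := lt_of_lt_of_le one_pos hcond
  have hepos : 0 < 1 / (β + 1) := by positivity
  have hKe : 1 ≤ K ^ (1 / (β + 1)) := Real.one_le_rpow hcond (le_of_lt hepos)
  have hps : 0 ≤ pstar := by
    rw [hpstar]
    have : 0 ≤ K ^ (1 / (β + 1)) - 1 := by linarith
    positivity
  refine ⟨hps, ?_⟩
  -- base value
  have hbase : 1 + c * pstar = K ^ (1 / (β + 1)) := by
    rw [hpstar]; field_simp; ring
  have htpos : 0 < 1 + c * pstar := by rw [hbase]; positivity
  have h1 : HasDerivAt (fun p : ℝ => 1 + c * p) c pstar := by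
    simpa using ((hasDerivAt_id pstar).const_mul c).const_add 1
  have h2 : HasDerivAt (fun p : ℝ => (1 + c * p) ^ (-β))
      (c * (-β) * (1 + c * pstar) ^ (-β - 1)) pstar := by
    have := h1.rpow_const (p := -β) (Or.inl (ne_of_gt htpos))
    simpa using this
  have h3 : HasDerivAt (fun p : ℝ => A * (Real.exp χ * (1 + c * p) ^ (-β) - 1))
      (A * (Real.exp χ * (c * (-β) * (1 + c * pstar) ^ (-β - 1)))) pstar := by
    exact (((h2.const_mul (Real.exp χ)).sub_const 1).const_mul A)
  have hkey : (1 + c * pstar) ^ (-β - 1) = K⁻¹ := by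
    rw [hbase, ← Real.rpow_mul (le_of_lt hKpos)]
    · rw [show (1 / (β + 1)) * (-β - 1) = -1 by field_simp; ring]
      exact Real.rpow_neg_one K
  have : A * (Real.exp χ * (c * (-β) * (1 + c * pstar) ^ (-β - 1))) = -1 := by
    rw [hkey]
    field_simp
    ring
  rw [← this]
  exact h3
end

section
/- (Proposition 3, cooperative V2X power allocation, unclamped form.) Let A > 0, c > 0, β > 0 and χ ∈ ℝ, and define g(p) = A·(e^χ·(1 + c·p)^(−β) − 1) for p ≥ 0. Suppose A·c·β·e^χ ≥ 1, set p_V* = (1/c)·( (A·c·β·e^χ)^(1/(β+1)) − 1 ) and p_R* = g(p_V*), and assume p_R* ≥ 0. Then (p_V*, p_R*) minimizes total power over the feasible set: for all p_V ≥ 0 and p_R ≥ 0 with p_R ≥ g(p_V), one has p_V + p_R ≥ p_V* + p_R*, with equality if and only if p_V = p_V* and p_R = p_R*. -/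
private lemma F_key (β : ℝ) (hβ : 0 < β) {t : ℝ} (ht : 0 < t) :
    0 ≤ β * t ^ (β+1) - (β+1) * t ^ β + 1 ∧
      (β * t ^ (β+1) - (β+1) * t ^ β + 1 = 0 ↔ t = 1) := by
  set F : ℝ → ℝ := fun s => β * s ^ (β+1) - (β+1) * s ^ β + 1 with hF
  have hd : ∀ x : ℝ, 0 < x → HasDerivAt F (β*(β+1)*(x^β - x^(β-1))) x := by
    intro x hx
    have h1 : HasDerivAt (fun s : ℝ => s ^ (β+1)) ((β+1) * x ^ β) x := by
      have := Real.hasDerivAt_rpow_const (x := x) (p := β+1) (Or.inl hx.ne')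
      simpa using this
    have h2 : HasDerivAt (fun s : ℝ => s ^ β) (β * x ^ (β-1)) x :=
      Real.hasDerivAt_rpow_const (Or.inl hx.ne')
    have := ((h1.const_mul β).sub (h2.const_mul (β+1))).add_const 1
    refine this.congr_deriv ?_
    ring
  have hF1 : F 1 = 0 := by simp [hF, Real.one_rpow]
  have hmono : StrictMonoOn F (Set.Ici (1:ℝ)) := by
    apply strictMonoOn_of_deriv_pos (convex_Ici 1)
    · intro x hx
      exact (hd x (lt_of_lt_of_le one_pos hx)).continuousAt.continuousWithinAt
    · intro x hx
      rw [interior_Ici] at hx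
      have hx0 : (0:ℝ) < x := lt_trans one_pos hx
      rw [(hd x hx0).deriv]
      have : x ^ (β-1) < x ^ β := by
        apply Real.rpow_lt_rpow_left_iff hx |>.mpr
        linarith
      have hb : 0 < β*(β+1) := by positivity
      nlinarith
  have hanti : StrictAntiOn F (Set.Ioc (0:ℝ) 1) := by
    apply strictAntiOn_of_deriv_neg (convex_Ioc 0 1)
    · intro x hx
      exact (hd x hx.1).continuousAt.continuousWithinAt
    · intro x hx
      rw [interior_Ioc] at hx
      rw [(hd x hx.1).deriv]
      have : x ^ β < x ^ (β-1) := by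
        apply Real.rpow_lt_rpow_left_iff_of_base_lt_one hx.1 hx.2 |>.mpr
        linarith
      have hb : 0 < β*(β+1) := by positivity
      nlinarith
  rcases lt_trichotomy t 1 with h | h | h
  · have : F 1 < F t := hanti ⟨ht, h.le⟩ ⟨one_pos, le_refl 1⟩ h
    rw [hF1] at this
    constructor
    · exact this.le
    · constructor
      · intro he; exact absurd he this.ne'
      · intro he; exact absurd he h.ne
  · subst h
    simpa [hF1] using (by simp [hF1] : F 1 = 0)
  · have : F 1 < F t := hmono (Set.mem_Ici.mpr (le_refl (1:ℝ))) h.le h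
    rw [hF1] at this
    constructor
    · exact this.le
    · constructor
      · intro he; exact absurd he this.ne'
      · intro he; exact absurd he h.ne'

private lemma key_ineq (β x y : ℝ) (hβ : 0 < β) (hx : 0 < x) (hy : 0 < y) :
    y + y/β ≤ x + y^(β+1) * x^(-β) / β ∧
      (x + y^(β+1) * x^(-β) / β = y + y/β ↔ x = y) := by
  set t := x / y with ht'
  have ht : 0 < t := div_pos hx hy
  have htβ : (0:ℝ) < t ^ (-β) := Real.rpow_pos_of_pos ht _
  have hid : x + y^(β+1) * x^(-β) / β - (y + y/β)
      = (y/β) * t^(-β) * (β * t^(β+1) - (β+1) * t^β + 1) := by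
    have e1 : t^(-β) * t^(β+1) = t := by
      rw [← Real.rpow_add ht]; norm_num
    have e2 : t^(-β) * t^β = 1 := by
      rw [← Real.rpow_add ht]; norm_num
    have e3 : t^(-β) = x^(-β) * y^β := by
      rw [ht', Real.div_rpow hx.le hy.le, Real.rpow_neg hy.le]; field_simp
    have e4 : y * y^β = y^(β+1) := by
      rw [show β+1 = 1+β by ring, Real.rpow_one_add' hy.le (by positivity : (0:ℝ) < 1+β).ne']
    have e5 : y * t = x := by rw [ht']; field_simp
    calc x + y^(β+1) * x^(-β) / β - (y + y/β)
        = (y*t) + (y * y^β) * x^(-β) / β - (y + y/β) := by rw [e4, e5]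
      _ = (y/β) * (β * (t^(-β) * t^(β+1)) - (β+1) * (t^(-β)*t^β) + (x^(-β)*y^β)) := by
          rw [e1, e2]; field_simp; ring
      _ = (y/β) * t^(-β) * (β * t^(β+1) - (β+1) * t^β + 1) := by
          rw [← e3]; ring
  obtain ⟨hFnn, hFeq⟩ := F_key β hβ ht
  have hfac : 0 < (y/β) * t^(-β) := by positivity
  constructor
  · nlinarith
  · constructor
    · intro he
      have h0 : (y/β) * t^(-β) * (β * t^(β+1) - (β+1) * t^β + 1) = 0 := by linarith [hid]
      have := (mul_eq_zero.mp h0).resolve_left hfac.ne'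
      have ht1 : t = 1 := hFeq.mp this
      have : x = y := by
        field_simp [ht'] at ht1
        rw [ht', div_eq_one_iff_eq hy.ne'] at ht1
        linarith
      exact this
    · intro he
      subst he
      have : t = 1 := by rw [ht', div_self hx.ne']
      rw [this] at hid
      simp [Real.one_rpow] at hid
      linarith

/-- Proposition 3 (cooperative V2X power allocation, unclamped form): the pair
`(p_V*, p_R*)` with `p_V* = (1/c)·((A·c·β·e^χ)^(1/(β+1)) − 1)` and `p_R* = g(p_V*)`
minimizes the total power over the feasible set, uniquely. -/
theorem cooperative_power_allocation_optimal (A c β χ : ℝ)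
    (hA : 0 < A) (hc : 0 < c) (hβ : 0 < β)
    (g : ℝ → ℝ)
    (hg : ∀ p, g p = A * (Real.exp χ * (1 + c * p) ^ (-β) - 1))
    (hcond : 1 ≤ A * c * β * Real.exp χ)
    (pVstar pRstar : ℝ)
    (hpV : pVstar = (1 / c) * ((A * c * β * Real.exp χ) ^ (1 / (β + 1)) - 1))
    (hpR : pRstar = g pVstar) (hpRnn : 0 ≤ pRstar) :
    ∀ p_V p_R : ℝ, 0 ≤ p_V → 0 ≤ p_R → g p_V ≤ p_R →
      pVstar + pRstar ≤ p_V + p_R ∧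
        (p_V + p_R = pVstar + pRstar ↔ p_V = pVstar ∧ p_R = pRstar) := by
  intro p_V p_R hpV0 hpR0 hfeas
  set E : ℝ := A * c * β * Real.exp χ with hE
  have hE0 : (0:ℝ) < E := lt_of_lt_of_le one_pos hcond
  set y : ℝ := E ^ (1/(β+1)) with hy'
  have hy1 : (1:ℝ) ≤ y := by
    calc (1:ℝ) = 1 ^ (1/(β+1)) := (Real.one_rpow _).symm
      _ ≤ E ^ (1/(β+1)) := Real.rpow_le_rpow zero_le_one hcond (by positivity)
  have hy0 : (0:ℝ) < y := lt_of_lt_of_le one_pos hy1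
  have hyE : y ^ (β+1) = E := by
    rw [hy', ← Real.rpow_mul hE0.le, one_div,
      inv_mul_cancel₀ (by positivity : (β:ℝ)+1 ≠ 0), Real.rpow_one]
  have hyx : 1 + c * pVstar = y := by
    rw [hpV]; field_simp; ring
  have hAe : A * Real.exp χ = y^(β+1) / (c * β) := by
    rw [hyE, hE]; field_simp
  -- express p + g p in canonical form
  have hform : ∀ p : ℝ, p + g p
      = (1/c) * ((1 + c*p) + y^(β+1) * (1 + c*p)^(-β) / β) - 1/c - A := by
    intro p
    rw [hg p]
    have : A * (Real.exp χ * (1 + c * p) ^ (-β) - 1)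
        = (A * Real.exp χ) * (1 + c * p) ^ (-β) - A := by ring
    rw [this, hAe]
    field_simp
    ring
  set x : ℝ := 1 + c * p_V with hx'
  have hx0 : (0:ℝ) < x := by positivity
  obtain ⟨hineq, hiff⟩ := key_ineq β x y hβ hx0 hy0
  have hyy : y + y^(β+1) * y^(-β) / β = y + y/β := by
    have : y^(β+1) * y^(-β) = y := by
      rw [← Real.rpow_add hy0]; norm_num
    rw [this]
  have hstar : pVstar + pRstar = (1/c) * (y + y/β) - 1/c - A := by
    rw [hpR, hform pVstar, hyx, ← hyy]
  have hV : p_V + g p_V = (1/c) * (x + y^(β+1) * x^(-β) / β) - 1/c - A := hform p_V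
  have hmain : pVstar + pRstar ≤ p_V + g p_V := by
    rw [hstar, hV]
    have h1c : (0:ℝ) < 1/c := by positivity
    nlinarith
  constructor
  · linarith
  · constructor
    · intro he
      have heq : p_V + g p_V = pVstar + pRstar := by linarith
      have hxy : x = y := by
        apply hiff.mp
        have : (1/c) * (x + y^(β+1) * x^(-β) / β) = (1/c) * (y + y/β) := by
          rw [← add_left_inj (-(1/c) - A)]
          have := hV; have := hstar
          linarith
        have hc' : (1/c : ℝ) ≠ 0 := by positivity
        exact mul_left_cancel₀ hc' this
      have hpVeq : p_V = pVstar := by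
        have : c * p_V = c * pVstar := by
          have := hyx; rw [hx'] at hxy; linarith
        exact mul_left_cancel₀ hc.ne' this
      refine ⟨hpVeq, ?_⟩
      have : g p_V = pRstar := by rw [hpVeq, hpR]
      linarith
    · rintro ⟨h1, h2⟩; rw [h1, h2]
end

section
/- (Proposition 1 as a minimization.) Let B > 0, c > 0, v > 0, p_M > 0, a ∈ ℝ, μ ∈ ℝ, σ > 0, δ ∈ (0,1), and let Φ denote the cumulative distribution function of the standard normal distribution. Let x ∈ ℝ satisfy Φ(x) = 1 - δ·(1 - Φ(-μ/σ)), and assume μ + σ·x ≥ 0. Define r(p) = (B/ln 2)·(ln(1 + c·p) − a) for p ≥ 0, and let q be a random variable distributed with the truncated Gaussian density f(q) = exp(-(q-μ)²/(2σ²)) / (√(2π)·σ·(1-Φ(-μ/σ))) on [0,∞). Set p̂ = (1/c)·( exp( v·(σ·x + μ)·(ln 2)/B + a ) − 1 ), and assume 0 ≤ p̂ ≤ p_M. Then p̂ is the minimum of the set { p ∈ [0, p_M] : P{ r(p) < q·v } ≤ δ }; that is, p̂ belongs to this set and every p in this set satisfies p ≥ p̂. -/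
open MeasureTheory Set Real

namespace V2IAux

/-- The standard normal pdf. -/
noncomputable def g (u : ℝ) : ℝ := Real.exp (-(u ^ 2) / 2) / Real.sqrt (2 * Real.pi)

lemma g_pos (u : ℝ) : 0 < g u :=
  div_pos (Real.exp_pos _) (Real.sqrt_pos.mpr (by positivity))

lemma g_eq : g = fun u : ℝ => Real.exp (-(1/2 : ℝ) * u ^ 2) / Real.sqrt (2 * Real.pi) := by
  funext u
  unfold g
  congr 1
  congr 1
  ring

lemma g_integrable : Integrable g := by
  rw [g_eq]
  exact (integrable_exp_neg_mul_sq (by norm_num : (0:ℝ) < 1/2)).div_const _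

lemma g_integral : ∫ u, g u = 1 := by
  rw [g_eq]
  rw [MeasureTheory.integral_div, integral_gaussian]
  rw [show (π / (1/2 : ℝ)) = 2 * π by ring]
  exact div_self (by positivity)

/-- The tail function of the standard normal. -/
noncomputable def G (t : ℝ) : ℝ := ∫ u in Set.Ioi t, g u

lemma cdf_add_tail_s12 (y : ℝ) : stdNormalCDF y + G y = 1 := by
  have h := intervalIntegral.integral_Iic_add_Ioi (b := y) (f := g) (μ := volume)
    g_integrable.integrableOn g_integrable.integrableOn
  rw [g_integral] at h
  exact h

/-- Strict monotonicity of the tail integral for a positive integrable function. -/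
lemma tail_lt {F : ℝ → ℝ} (hFi : Integrable F) (hFpos : ∀ x, 0 < F x) {a b : ℝ}
    (h : a < b) : ∫ u in Set.Ioi b, F u < ∫ u in Set.Ioi a, F u := by
  rw [← Set.Ioc_union_Ioi_eq_Ioi h.le,
    setIntegral_union (Set.Ioc_disjoint_Ioi le_rfl) measurableSet_Ioi
      hFi.integrableOn hFi.integrableOn]
  have hpos : 0 < ∫ u in Set.Ioc a b, F u := by
    rw [← intervalIntegral.integral_of_le h.le]
    exact intervalIntegral.intervalIntegral_pos_of_pos_on hFi.intervalIntegrable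
      (fun x _ => hFpos x) h
  linarith

lemma G_pos (y : ℝ) : 0 < G y := by
  have h1 : (0:ℝ) ≤ G (y + 1) :=
    setIntegral_nonneg measurableSet_Ioi fun x _ => (g_pos x).le
  have h2 : G (y + 1) < G y := tail_lt g_integrable g_pos (lt_add_one y)
  linarith

lemma shift_Ioi (h : ℝ → ℝ) (t c : ℝ) :
    ∫ q in Set.Ioi t, h (q - c) = ∫ q in Set.Ioi (t - c), h q := by
  rw [← integral_indicator measurableSet_Ioi, ← integral_indicator measurableSet_Ioi,
    ← integral_sub_right_eq_self ((Set.Ioi (t - c)).indicator h) c]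
  congr 1
  funext q
  by_cases hq : t < q
  · rw [Set.indicator_of_mem (Set.mem_Ioi.mpr hq),
      Set.indicator_of_mem (Set.mem_Ioi.mpr (by linarith))]
  · rw [Set.indicator_of_notMem (by simpa using hq),
      Set.indicator_of_notMem (by simp only [Set.mem_Ioi]; intro hcon; exact hq (by linarith))]

lemma tail_affine (μ σ t : ℝ) (hσ : 0 < σ) :
    ∫ q in Set.Ioi t, g ((q - μ) / σ) = σ * G ((t - μ) / σ) := by
  have h1 : ∫ q in Set.Ioi t, g ((q - μ) / σ) = ∫ q in Set.Ioi (t - μ), g (q / σ) :=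
    shift_Ioi (fun u => g (u / σ)) t μ
  have h2 : ∫ q in Set.Ioi (t - μ), g (σ⁻¹ * q)
      = (σ⁻¹)⁻¹ • ∫ u in Set.Ioi (σ⁻¹ * (t - μ)), g u :=
    integral_comp_mul_left_Ioi g _ (inv_pos.mpr hσ)
  simp only [inv_inv, smul_eq_mul] at h2
  rw [h1]
  have h3 : (fun q => g (q / σ)) = fun q => g (σ⁻¹ * q) := by
    funext q; rw [inv_mul_eq_div]
  rw [h3]
  rw [h2, G]
  congr 2
  · rw [inv_mul_eq_div]

end V2IAux

open V2IAux

/-- Proposition 1 as a minimization: `p̂ = (1/c)·(exp(v·(σ·x + μ)·ln 2 / B + a) − 1)` is the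
least element of the set of powers `p ∈ [0, p_M]` satisfying the outage constraint
`P{ r(p) < q·v } ≤ δ`. -/
theorem v2i_power_minimization (B c v p_M a μ σ δ x : ℝ)
    (hB : 0 < B) (hc : 0 < c) (hv : 0 < v) (hpM : 0 < p_M) (hσ : 0 < σ)
    (hδ : δ ∈ Set.Ioo (0 : ℝ) 1)
    (hx : stdNormalCDF x = 1 - δ * (1 - stdNormalCDF (-μ / σ)))
    (hpos : 0 ≤ μ + σ * x)
    (r : ℝ → ℝ)
    (hr : ∀ p, r p = (B / Real.log 2) * (Real.log (1 + c * p) - a))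
    (f : ℝ → ℝ)
    (hf : ∀ q, f q = Real.exp (-((q - μ) ^ 2) / (2 * σ ^ 2)) /
        (Real.sqrt (2 * Real.pi) * σ * (1 - stdNormalCDF (-μ / σ))))
    (phat : ℝ)
    (hphat : phat = (1 / c) * (Real.exp (v * (σ * x + μ) * Real.log 2 / B + a) - 1))
    (hphat_range : phat ∈ Set.Icc 0 p_M) :
    IsLeast {p : ℝ | p ∈ Set.Icc 0 p_M ∧
      (∫ q in {q : ℝ | 0 ≤ q ∧ r p < q * v}, f q) ≤ δ} phat := by
  set K : ℝ := 1 - stdNormalCDF (-μ / σ) with hKdef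
  have hKG : K = G (-μ / σ) := by
    have := cdf_add_tail_s12 (-μ / σ); rw [hKdef]; linarith
  have hKpos : 0 < K := hKG ▸ G_pos _
  -- rewrite f in terms of g
  have f_eq : ∀ q, f q = g ((q - μ) / σ) / (σ * K) := by
    intro q
    rw [hf q, g]
    have hexp : -(((q - μ) / σ) ^ 2) / 2 = -((q - μ) ^ 2) / (2 * σ ^ 2) := by
      rw [div_pow]; ring
    rw [hexp, div_div]
    ring_nf
  have f_integrable : Integrable f := by
    have h1 : Integrable fun q : ℝ => g (σ⁻¹ * q) :=
      (integrable_comp_mul_left_iff g (by positivity : σ⁻¹ ≠ (0:ℝ))).mpr g_integrable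
    have h2 : Integrable fun q : ℝ => g (σ⁻¹ * (q - μ)) := h1.comp_sub_right μ
    have h3 : f = fun q => g (σ⁻¹ * (q - μ)) / (σ * K) := by
      funext q; rw [f_eq q, inv_mul_eq_div]
    rw [h3]
    exact h2.div_const _
  have f_pos : ∀ q, 0 < f q := by
    intro q
    rw [f_eq q]
    exact div_pos (g_pos _) (mul_pos hσ hKpos)
  -- the tail integrals of f
  have tail_f : ∀ t, ∫ q in Set.Ioi t, f q = G ((t - μ) / σ) / K := by
    intro t
    simp_rw [f_eq]
    rw [MeasureTheory.integral_div, tail_affine μ σ t hσ]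
    field_simp
  -- key value at σ*x + μ
  have hGx : G x = δ * K := by
    have := cdf_add_tail_s12 x
    rw [hx] at this
    linarith
  have tail_key : ∫ q in Set.Ioi (σ * x + μ), f q = δ := by
    rw [tail_f, show (σ * x + μ - μ) / σ = x by field_simp; ring, hGx,
      mul_div_assoc, div_self hKpos.ne', mul_one]
  -- value of r at phat
  have hlog2 : (0:ℝ) < Real.log 2 := Real.log_pos one_lt_two
  have h1pc : 1 + c * phat = Real.exp (v * (σ * x + μ) * Real.log 2 / B + a) := by
    rw [hphat]; field_simp; ring
  have hrphat : r phat = v * (σ * x + μ) := by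
    rw [hr, h1pc, Real.log_exp]
    field_simp
    ring
  -- strict positivity of σ*x + μ
  have htpos : 0 < σ * x + μ := by
    rcases eq_or_lt_of_le hpos with h0 | h0
    · exfalso
      have hxval : x = -μ / σ := by field_simp; linarith
      rw [hxval] at hx
      have h2 : stdNormalCDF (-μ / σ) = 1 - K := by rw [hKdef]; ring
      have hδ1 : δ < 1 := hδ.2
      have h3 : K = δ * K := by rw [h2] at hx; linarith
      nlinarith [mul_pos hKpos (sub_pos.mpr hδ1)]
    · linarith
  -- the constraint set at phat is exactly Ioi (σ*x+μ)
  have hset : {q : ℝ | 0 ≤ q ∧ r phat < q * v} = Set.Ioi (σ * x + μ) := by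
    ext q
    simp only [Set.mem_setOf_eq, Set.mem_Ioi, hrphat]
    constructor
    · rintro ⟨-, h⟩
      have h' : (σ * x + μ) * v < q * v := by linarith
      exact (mul_lt_mul_iff_left₀ hv).mp h'
    · intro h
      refine ⟨le_trans htpos.le h.le, ?_⟩
      have := (mul_lt_mul_iff_left₀ hv).mpr h
      linarith
  constructor
  · refine ⟨hphat_range, ?_⟩
    rw [hset, tail_key]
  · rintro p ⟨hpIcc, hpint⟩
    by_contra hlt
    push_neg at hlt
    -- hlt : p < phat
    have h1p : (0:ℝ) < 1 + c * p := by nlinarith [hpIcc.1]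
    have hrp : r p < r phat := by
      rw [hr p, hr phat]
      have hlog : Real.log (1 + c * p) < Real.log (1 + c * phat) :=
        Real.log_lt_log h1p (by nlinarith)
      exact mul_lt_mul_of_pos_left (by linarith) (div_pos hB hlog2)
    set s : ℝ := max (r p / v) 0 with hsdef
    have hs_lt : s < σ * x + μ := by
      apply max_lt _ htpos
      rw [div_lt_iff₀ hv]
      rw [hrphat] at hrp
      linarith
    have hsub : Set.Ioi s ⊆ {q : ℝ | 0 ≤ q ∧ r p < q * v} := by
      intro q hq
      simp only [Set.mem_Ioi, hsdef] at hq
      constructor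
      · exact le_of_lt (lt_of_le_of_lt (le_max_right _ _) hq)
      · have : r p / v < q := lt_of_le_of_lt (le_max_left _ _) hq
        rw [div_lt_iff₀ hv] at this
        linarith
    have hmono : ∫ q in Set.Ioi s, f q ≤ ∫ q in {q : ℝ | 0 ≤ q ∧ r p < q * v}, f q :=
      setIntegral_mono_set f_integrable.integrableOn
        (Filter.Eventually.of_forall fun q => (f_pos q).le)
        (HasSubset.Subset.eventuallyLE hsub)
    have hstrict : ∫ q in Set.Ioi (σ * x + μ), f q < ∫ q in Set.Ioi s, f q :=
      tail_lt f_integrable f_pos hs_lt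
    rw [tail_key] at hstrict
    linarith
end
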